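/- arXiv:2201.05416 — 5 statements merged into one kernel-verified Lean document; each statement's English description precedes it below -/
import Mathlib

section
/- Let Δ > 0 be a real number and let (Σₙ)_{n∈ℕ} be a sequence of subsets of the nonnegative reals [0,∞) such that for every n ∈ ℕ one has Σₙ \ {0} = {x + Δ : x ∈ Σ_{n+1}}. Then: (i) for every n, Σₙ ⊆ {Δ·m : m ∈ ℕ}; (ii) for all n, m ∈ ℕ, Δ·m ∈ Σₙ if and only if 0 ∈ Σ_{n+m}; (iii) if in addition 0 ∈ Σₙ for every n, then Σₙ = {Δ·m : m ∈ ℕ} for every n. -/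
/-!
Reading the shift relation in both directions, a nonzero point `x ∈ S n` descends to
`x - Δ ∈ S (n + 1)`, and any point of `S (n + 1)` ascends to `x + Δ ∈ S n`. Since all
the sets lie in `[0, ∞)`, a point can only descend finitely often (Archimedes), and the
descent must stop exactly at `0`; hence it is a multiple of `Δ`. Ascending `m` times
from `0 ∈ S (n + m)` gives the converse `Δ * m ∈ S n`.
-/

namespace LandauLevels

section AddGroup

variable {G : Type*} [AddGroup G] {Δ : G} {S : ℕ → Set G}

theorem sub_mem_succ (hshift : ∀ n, S n \ {0} = (fun x => x + Δ) '' S (n + 1))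
    {n : ℕ} {x : G} (hx : x ∈ S n) (hx0 : x ≠ 0) : x - Δ ∈ S (n + 1) := by
  obtain ⟨y, hy, rfl⟩ := (hshift n).le ⟨hx, hx0⟩
  simpa using hy

theorem add_mem_of_mem_succ (hshift : ∀ n, S n \ {0} = (fun x => x + Δ) '' S (n + 1))
    {n : ℕ} {x : G} (hx : x ∈ S (n + 1)) : x + Δ ∈ S n :=
  ((hshift n).ge ⟨x, hx, rfl⟩).1

end AddGroup

variable {R : Type*} [CommRing R] [LinearOrder R] [IsStrictOrderedRing R]
  {Δ : R} {S : ℕ → Set R}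

theorem mul_natCast_mem_iff (hΔ : 0 < Δ)
    (hshift : ∀ n, S n \ {0} = (fun x => x + Δ) '' S (n + 1)) (n m : ℕ) :
    Δ * m ∈ S n ↔ 0 ∈ S (n + m) := by
  induction m generalizing n with
  | zero => simp
  | succ m ih =>
    rw [← add_assoc, add_right_comm, ← ih (n + 1)]
    constructor
    · intro h
      have hne : Δ * ((m + 1 : ℕ) : R) ≠ 0 := by positivity
      simpa [mul_add] using sub_mem_succ hshift h hne
    · intro h
      simpa [mul_add] using add_mem_of_mem_succ hshift h

theorem exists_eq_mul_natCast_of_le_mul (hnonneg : ∀ n, S n ⊆ Set.Ici 0)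
    (hshift : ∀ n, S n \ {0} = (fun x => x + Δ) '' S (n + 1)) (k : ℕ) :
    ∀ {n : ℕ} {x : R}, x ∈ S n → x ≤ Δ * k → ∃ m : ℕ, x = Δ * m := by
  induction k with
  | zero =>
    intro n x hx hle
    exact ⟨0, by simpa using le_antisymm hle (by simpa using hnonneg n hx)⟩
  | succ k ih =>
    intro n x hx hle
    by_cases hx0 : x = 0
    · exact ⟨0, by simp [hx0]⟩
    · obtain ⟨m, hm⟩ := ih (sub_mem_succ hshift hx hx0) (by push_cast at hle; linarith)
      exact ⟨m + 1, by push_cast; linarith⟩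

theorem subset_range_mul_natCast [Archimedean R] (hΔ : 0 < Δ)
    (hnonneg : ∀ n, S n ⊆ Set.Ici 0)
    (hshift : ∀ n, S n \ {0} = (fun x => x + Δ) '' S (n + 1)) (n : ℕ) :
    S n ⊆ {x : R | ∃ m : ℕ, x = Δ * m} := by
  intro x hx
  obtain ⟨k, hk⟩ := Archimedean.arch x hΔ
  exact exists_eq_mul_natCast_of_le_mul hnonneg hshift k hx (by rwa [← nsmul_eq_mul'])

end LandauLevels

open LandauLevels in
/-- **Set-theoretic bootstrap for abstract Landau levels.**
If `Δ > 0` and `(S n)` is a sequence of subsets of `[0,∞)` with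
`S n \ {0} = S (n+1) + Δ` for every `n`, then each `S n` is contained in the
discrete set `Δ·ℕ`; moreover `Δ·m ∈ S n ↔ 0 ∈ S (n+m)`, and if `0 ∈ S n`
for every `n` then `S n = Δ·ℕ` for every `n`. -/
theorem landau_levels_bootstrap (Δ : ℝ) (hΔ : 0 < Δ) (S : ℕ → Set ℝ)
    (hnonneg : ∀ n, S n ⊆ Set.Ici (0 : ℝ))
    (hshift : ∀ n, S n \ {0} = (fun x => x + Δ) '' S (n + 1)) :
    (∀ n, S n ⊆ {x : ℝ | ∃ m : ℕ, x = Δ * m}) ∧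
    (∀ n m : ℕ, (Δ * m ∈ S n ↔ (0 : ℝ) ∈ S (n + m))) ∧
    ((∀ n, (0 : ℝ) ∈ S n) → ∀ n, S n = {x : ℝ | ∃ m : ℕ, x = Δ * m}) := by
  refine ⟨subset_range_mul_natCast hΔ hnonneg hshift, mul_natCast_mem_iff hΔ hshift, ?_⟩
  intro hzero n
  refine (subset_range_mul_natCast hΔ hnonneg hshift n).antisymm ?_
  rintro x ⟨m, rfl⟩
  exact (mul_natCast_mem_iff hΔ hshift n m).mpr (hzero (n + m))
end

section
/- Let A be a unital C*-algebra, let p and q be projections in A (self-adjoint idempotents), and let T ∈ A satisfy T·p = T = q·T, and suppose that both T*T + (1 − p) and TT* + (1 − q) are invertible in A. Then the element v := T·(T*T + (1 − p))^{-1/2} satisfies v*v = p and vv* = q; in particular, p and q are Murray–von Neumann equivalent. -/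
/-!
Put `s = T*T + (1 - p)` and `t = TT* + (1 - q)`. Since `Tp = T`, the projection `p` commutes
with `s` and `sp = T*T`; hence `p` commutes with `r = s^{-1/2}` and
`v*v = r T*T r = p (r s r) = p`. On the other side `Ts = tT`, so `Ts⁻¹ = t⁻¹T` and
`vv* = T s⁻¹ T* = t⁻¹ TT* = t⁻¹ t q = q`.
-/

open CFC
open scoped Ring

theorem SemiconjBy.ringInverse {M₀ : Type*} [MonoidWithZero M₀] {a x y : M₀}
    (h : SemiconjBy a x y) (hx : IsUnit x) (hy : IsUnit y) : SemiconjBy a x⁻¹ʳ y⁻¹ʳ := by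
  obtain ⟨x, rfl⟩ := hx
  obtain ⟨y, rfl⟩ := hy
  rw [Ring.inverse_unit, Ring.inverse_unit]
  exact h.units_inv_right

theorem Commute.cfcSqrt_right {A : Type*} [CStarAlgebra A] [PartialOrder A] [StarOrderedRing A]
    {a b : A} (h : Commute a b) : Commute a (sqrt b) := by
  rw [sqrt_eq_cfc]
  exact (h.symm.cfc_nnreal _).symm

section Intertwiner

variable {R : Type*} [Ring R] [StarRing R] {p q T : R}

theorem star_mul_self_add_one_sub_mul (hp : IsIdempotentElem p) (hTp : T * p = T) :
    (star T * T + (1 - p)) * p = star T * T := by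
  rw [add_mul, mul_assoc, hTp, sub_mul, one_mul, hp.eq, sub_self, add_zero]

theorem commute_star_mul_self_add_one_sub (hp : IsStarProjection p) (hTp : T * p = T) :
    Commute p (star T * T + (1 - p)) := by
  have hpT : p * star T = star T := by
    simpa [hp.isSelfAdjoint.star_eq] using congrArg star hTp
  rw [Commute, SemiconjBy, star_mul_self_add_one_sub_mul hp.isIdempotentElem hTp, mul_add,
    ← mul_assoc, hpT, mul_sub, mul_one, hp.isIdempotentElem.eq, sub_self, add_zero]

theorem semiconjBy_star_mul_self_add_one_sub (hTp : T * p = T) (hqT : q * T = T) :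
    SemiconjBy T (star T * T + (1 - p)) (T * star T + (1 - q)) := by
  rw [SemiconjBy, mul_add, add_mul, ← mul_assoc, mul_sub, sub_mul, mul_one, one_mul, hTp, hqT]

end Intertwiner

/-- **Murray–von Neumann equivalence from an invertible intertwiner.**
In a unital C*-algebra `A`, if `p, q` are projections, `T ∈ A` satisfies
`T·p = T = q·T`, and both `T*T + (1-p)` and `TT* + (1-q)` are invertible,
then `v := T·(T*T + (1-p))^{-1/2}` is a partial isometry with `v*v = p` and
`vv* = q`; in particular `p` and `q` are Murray–von Neumann equivalent. -/
theorem murray_von_neumann_of_intertwiner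
    {A : Type*} [CStarAlgebra A] [PartialOrder A] [StarOrderedRing A]
    (p q T : A)
    (hp : IsSelfAdjoint p) (hp2 : p * p = p)
    (hq : IsSelfAdjoint q) (hq2 : q * q = q)
    (hTp : T * p = T) (hqT : q * T = T)
    (hinv₁ : IsUnit (star T * T + (1 - p)))
    (hinv₂ : IsUnit (T * star T + (1 - q))) :
    star (T * CFC.sqrt (Ring.inverse (star T * T + (1 - p)))) *
        (T * CFC.sqrt (Ring.inverse (star T * T + (1 - p)))) = p ∧
      (T * CFC.sqrt (Ring.inverse (star T * T + (1 - p)))) *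
        star (T * CFC.sqrt (Ring.inverse (star T * T + (1 - p)))) = q := by
  have hP : IsStarProjection p := ⟨hp2, hp⟩
  have hstarT : star T * q = star T := by simpa [hq.star_eq] using congrArg star hqT
  have hsp := star_mul_self_add_one_sub_mul hP.isIdempotentElem hTp
  have hps := commute_star_mul_self_add_one_sub hP hTp
  have hTs := semiconjBy_star_mul_self_add_one_sub hTp hqT
  have htq : (T * star T + (1 - q)) * q = T * star T := by
    simpa using star_mul_self_add_one_sub_mul (T := star T) hq2 hstarT
  set s := star T * T + (1 - p)
  set t := T * star T + (1 - q)
  have hs : IsStrictlyPositive s :=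
    hinv₁.isStrictlyPositive (add_nonneg (star_mul_self_nonneg T) hP.one_sub.nonneg)
  set r := sqrt s⁻¹ʳ
  have hr : star r = r := (sqrt_nonneg _).isSelfAdjoint.star_eq
  have hpr : Commute p r := Commute.cfcSqrt_right (hps.ringInverse hinv₁ hinv₁)
  constructor
  · calc star (T * r) * (T * r) = r * (p * s) * r := by
          rw [hps.eq, hsp, star_mul, hr]
          simp only [mul_assoc]
      _ = p * (r * s * r) := by simp only [← mul_assoc, hpr.eq]
      _ = p := by rw [← conjSqrt_apply, conjSqrt_ringInverse_self s hs, mul_one]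
  · calc T * r * star (T * r) = T * s⁻¹ʳ * star T := by
          rw [star_mul, hr, mul_assoc, ← mul_assoc r, sqrt_mul_sqrt_self _ hs.ringInverse.nonneg,
            mul_assoc]
      _ = t⁻¹ʳ * (t * q) := by
          rw [(hTs.ringInverse hinv₁ hinv₂).eq, htq, mul_assoc]
      _ = q := by rw [← mul_assoc, Ring.inverse_mul_cancel _ hinv₂, one_mul]
end

section
/- Let H₁ and H₂ be complex Hilbert spaces, let b₊ ≤ 0 < b₋ be real numbers, and let a : H₁ → H₂ be a bounded linear operator such that: h := a*a − b₊·1 is a positive operator on H₁ (i.e., a*a ≥ b₊·1 rearranged so that h ≥ 0); ⟨a a* ξ, ξ⟩ ≥ b₋·‖ξ‖² for all ξ ∈ H₂; and ker a ≠ {0}. Then −b₊ belongs to σ(h), σ(h) ⊆ {−b₊} ∪ [b₋ − b₊, ∞), and hence −b₊ is the minimum of σ(h) and is an isolated point of σ(h), with the interval (−b₊, b₋ − b₊) disjoint from σ(h). -/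
/-!
Write `T = a† a`, so that `h = T - b₊`. Since `T` is self-adjoint its spectrum is real, and by
Jacobson's lemma every nonzero point of `σ(a† a)` lies in `σ(a a†)`. The hypothesis on `a a†` is a
coercivity bound, so `a a† - z` is invertible whenever `re z < b₋`; hence `σ(T) ⊆ {0} ∪ [b₋, ∞)`.
A nonzero vector in `ker a` is killed by `T`, so `0 ∈ σ(T)`. Shifting by `-b₊` gives the claims.
-/

open ContinuousLinearMap
open scoped InnerProductSpace

namespace ContinuousLinearMap

section

variable {𝕜 E F : Type*} [NontriviallyNormedField 𝕜] [NormedAddCommGroup E] [NormedSpace 𝕜 E]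
  [NormedAddCommGroup F] [NormedSpace 𝕜 F]

theorem isUnit_smul_one_sub_comp_of_isUnit {a : E →L[𝕜] F} {b : F →L[𝕜] E} {z : 𝕜} (hz : z ≠ 0)
    (h : IsUnit (z • (1 : F →L[𝕜] F) - a ∘L b)) : IsUnit (z • (1 : E →L[𝕜] E) - b ∘L a) := by
  obtain ⟨v, hv_right, hv_left⟩ := isUnit_iff_exists.mp h
  refine isUnit_iff_exists.mpr ⟨z⁻¹ • (1 + b ∘L v ∘L a), ?_, ?_⟩
  · ext x
    have hv : a (b (v (a x))) = z • v (a x) - a x := by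
      rw [← sub_sub_cancel (z • v (a x)) (a (b (v (a x))))]
      simpa using congr(z • v (a x) - $hv_right (a x))
    show (z • 1 - b ∘L a) (z⁻¹ • (x + b (v (a x)))) = x
    rw [map_smul, inv_smul_eq_iff₀ hz]
    simp [hv]
  · ext x
    have hv : v (z • a x - a (b (a x))) = a x := by simpa using congr($hv_left (a x))
    show z⁻¹ • ((z • x - b (a x)) + b (v (a (z • x - b (a x))))) = x
    rw [map_sub, map_smul, hv, sub_add_cancel, inv_smul_smul₀ hz]

theorem spectrum_comp_subset_insert_zero (a : E →L[𝕜] F) (b : F →L[𝕜] E) :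
    spectrum 𝕜 (b ∘L a) ⊆ insert 0 (spectrum 𝕜 (a ∘L b)) := by
  intro z hz
  by_contra hz'
  obtain ⟨hz0, hab⟩ := not_or.mp hz'
  rw [spectrum.mem_iff, Algebra.algebraMap_eq_smul_one] at hz
  rw [spectrum.mem_iff, Algebra.algebraMap_eq_smul_one, not_not] at hab
  exact hz (isUnit_smul_one_sub_comp_of_isUnit hz0 hab)

theorem zero_mem_spectrum_comp_of_ker_ne_bot {a : E →L[𝕜] F} (b : F →L[𝕜] E)
    (ha : LinearMap.ker (a : E →ₗ[𝕜] F) ≠ ⊥) : (0 : 𝕜) ∈ spectrum 𝕜 (b ∘L a) := by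
  obtain ⟨x, hx, hx0⟩ := Submodule.exists_mem_ne_zero_of_ne_bot ha
  rw [spectrum.zero_mem_iff]
  intro hba
  obtain ⟨v, hv⟩ := hba.exists_left_inv
  have hax : a x = 0 := hx
  exact hx0 (by simpa [hax, eq_comm] using congr($hv x))

end

theorem le_re_of_mem_spectrum {𝕜 E : Type*} [RCLike 𝕜] [NormedAddCommGroup E]
    [InnerProductSpace 𝕜 E] [CompleteSpace E] {f : E →L[𝕜] E} {c : ℝ}
    (hf : ∀ x, c * ‖x‖ ^ 2 ≤ RCLike.re ⟪f x, x⟫_𝕜) {z : 𝕜} (hz : z ∈ spectrum 𝕜 f) :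
    c ≤ RCLike.re z := by
  by_contra! hzc
  refine spectrum.mem_iff.mp hz ?_
  rw [← neg_sub]
  refine (isUnit_of_forall_le_norm_inner_map _ (c := ⟨c - RCLike.re z, by linarith⟩)
    (NNReal.coe_pos.mp (sub_pos.mpr hzc)) fun x ↦ ?_).neg
  calc ‖x‖ ^ 2 * (c - RCLike.re z) ≤ RCLike.re ⟪(f - algebraMap 𝕜 _ z) x, x⟫_𝕜 := by
        rw [sub_apply, Algebra.algebraMap_eq_smul_one, smul_apply, one_apply_eq_self,
          inner_sub_left, inner_smul_left, inner_self_eq_norm_sq_to_K, ← RCLike.ofReal_pow,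
          map_sub, RCLike.re_mul_ofReal, RCLike.conj_re]
        linarith [hf x]
    _ ≤ _ := RCLike.re_le_norm _

theorem spectrum_adjoint_comp_self_subset {H₁ H₂ : Type*} [NormedAddCommGroup H₁]
    [InnerProductSpace ℂ H₁] [CompleteSpace H₁] [NormedAddCommGroup H₂] [InnerProductSpace ℂ H₂]
    [CompleteSpace H₂] (a : H₁ →L[ℂ] H₂) {c : ℝ}
    (hc : ∀ ξ, c * ‖ξ‖ ^ 2 ≤ (⟪(a ∘L adjoint a) ξ, ξ⟫_ℂ).re) :
    spectrum ℂ (adjoint a ∘L a) ⊆ (fun r : ℝ ↦ (r : ℂ)) '' insert 0 (Set.Ici c) := by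
  intro z hz
  refine ⟨z.re, ?_, ((isPositive_adjoint_comp_self a).isSelfAdjoint.mem_spectrum_eq_re hz).symm⟩
  rcases spectrum_comp_subset_insert_zero a (adjoint a) hz with rfl | hz'
  · exact Or.inl rfl
  · exact Or.inr (le_re_of_mem_spectrum hc hz')

end ContinuousLinearMap

theorem lowest_landau_level_isolated_general
    {H₁ H₂ : Type*} [NormedAddCommGroup H₁] [InnerProductSpace ℂ H₁] [CompleteSpace H₁]
    [NormedAddCommGroup H₂] [InnerProductSpace ℂ H₂] [CompleteSpace H₂]
    (bp bm : ℝ) (hbm : 0 < bm)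
    (a : H₁ →L[ℂ] H₂)
    (hbelow : ∀ ξ : H₂, bm * ‖ξ‖ ^ 2 ≤ (⟪(a ∘L adjoint a) ξ, ξ⟫_ℂ).re)
    (hker : LinearMap.ker (a : H₁ →ₗ[ℂ] H₂) ≠ ⊥) :
    ((-bp : ℝ) : ℂ) ∈ spectrum ℂ ((adjoint a ∘L a) - (bp : ℂ) • (1 : H₁ →L[ℂ] H₁)) ∧
    spectrum ℂ ((adjoint a ∘L a) - (bp : ℂ) • (1 : H₁ →L[ℂ] H₁)) ⊆
      (fun r : ℝ => (r : ℂ)) '' ({-bp} ∪ Set.Ici (bm - bp)) ∧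
    (fun r : ℝ => (r : ℂ)) '' Set.Ioo (-bp) (bm - bp) ∩
      spectrum ℂ ((adjoint a ∘L a) - (bp : ℂ) • (1 : H₁ →L[ℂ] H₁)) = ∅ ∧
    IsLeast {r : ℝ | (r : ℂ) ∈
      spectrum ℂ ((adjoint a ∘L a) - (bp : ℂ) • (1 : H₁ →L[ℂ] H₁))} (-bp) := by
  have shift : ∀ w, w ∈ spectrum ℂ (adjoint a ∘L a - (bp : ℂ) • 1) ↔
      w + bp ∈ spectrum ℂ (adjoint a ∘L a) := fun w ↦ by
    rw [← Algebra.algebraMap_eq_smul_one, ← spectrum.sub_singleton_eq]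
    simp [Set.sub_singleton, sub_eq_iff_eq_add]
  have hmem : ((-bp : ℝ) : ℂ) ∈ spectrum ℂ (adjoint a ∘L a - (bp : ℂ) • 1) := (shift _).mpr
    (by simpa using zero_mem_spectrum_comp_of_ker_ne_bot (adjoint a) hker)
  have hsub : spectrum ℂ (adjoint a ∘L a - (bp : ℂ) • 1) ⊆
      (fun r : ℝ ↦ (r : ℂ)) '' ({-bp} ∪ Set.Ici (bm - bp)) := fun w hw ↦ by
    obtain ⟨r, hr, hrw⟩ := spectrum_adjoint_comp_self_subset a hbelow ((shift w).mp hw)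
    refine ⟨r - bp, ?_, by push_cast; linear_combination hrw⟩
    rcases hr with rfl | hr
    · simp
    · exact Or.inr (by simp only [Set.mem_Ici] at hr ⊢; linarith)
  have real_cases : ∀ r : ℝ, (r : ℂ) ∈ spectrum ℂ (adjoint a ∘L a - (bp : ℂ) • 1) →
      r = -bp ∨ bm - bp ≤ r := fun r hr ↦ by
    obtain ⟨s, hs, hsr⟩ := hsub hr
    obtain rfl := Complex.ofReal_injective hsr
    simpa using hs
  refine ⟨hmem, hsub, Set.eq_empty_iff_forall_notMem.mpr ?_, hmem, fun r hr ↦ ?_⟩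
  · rintro _ ⟨⟨r, hr, rfl⟩, hz⟩
    rcases real_cases r hz with h | h
    exacts [hr.1.ne' h, hr.2.not_ge h]
  · rcases real_cases r hr with h | h <;> linarith

/-- **Isolated lowest Landau level, Hilbert space version.**
Let `bp ≤ 0 < bm` (playing the roles of `b₊` and `b₋`) and let `a : H₁ → H₂` be
a bounded operator between complex Hilbert spaces such that `h := a*a - b₊·1`
is positive, `⟨aa* ξ, ξ⟩ ≥ b₋·‖ξ‖²`, and `ker a ≠ 0`.  Then `-b₊ ∈ σ(h)`,
`σ(h) ⊆ {-b₊} ∪ [b₋ - b₊, ∞)`, the open interval `(-b₊, b₋ - b₊)` misses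
`σ(h)`, and `-b₊` is the minimum of `σ(h)`; hence `-b₊` is an isolated point
of `σ(h)` (the lowest Landau level). -/
theorem lowest_landau_level_isolated
    {H₁ H₂ : Type*} [NormedAddCommGroup H₁] [InnerProductSpace ℂ H₁] [CompleteSpace H₁]
    [NormedAddCommGroup H₂] [InnerProductSpace ℂ H₂] [CompleteSpace H₂]
    (bp bm : ℝ) (hbp : bp ≤ 0) (hbm : 0 < bm)
    (a : H₁ →L[ℂ] H₂)
    (hpos : ∀ ξ : H₁,
      0 ≤ (⟪((adjoint a ∘L a) - (bp : ℂ) • (1 : H₁ →L[ℂ] H₁)) ξ, ξ⟫_ℂ).re)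
    (hbelow : ∀ ξ : H₂, bm * ‖ξ‖ ^ 2 ≤ (⟪(a ∘L adjoint a) ξ, ξ⟫_ℂ).re)
    (hker : LinearMap.ker (a : H₁ →ₗ[ℂ] H₂) ≠ ⊥) :
    ((-bp : ℝ) : ℂ) ∈ spectrum ℂ ((adjoint a ∘L a) - (bp : ℂ) • (1 : H₁ →L[ℂ] H₁)) ∧
    spectrum ℂ ((adjoint a ∘L a) - (bp : ℂ) • (1 : H₁ →L[ℂ] H₁)) ⊆
      (fun r : ℝ => (r : ℂ)) '' ({-bp} ∪ Set.Ici (bm - bp)) ∧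
    (fun r : ℝ => (r : ℂ)) '' Set.Ioo (-bp) (bm - bp) ∩
      spectrum ℂ ((adjoint a ∘L a) - (bp : ℂ) • (1 : H₁ →L[ℂ] H₁)) = ∅ ∧
    IsLeast {r : ℝ | (r : ℂ) ∈
      spectrum ℂ ((adjoint a ∘L a) - (bp : ℂ) • (1 : H₁ →L[ℂ] H₁))} (-bp) :=
  lowest_landau_level_isolated_general bp bm hbm a hbelow hker
end

section
/- For every natural number n, the function ψₙ : ℝ → ℝ defined by ψₙ(x) = Heₙ(√2·x)·exp(−x²/2), where Heₙ is the n-th probabilists' Hermite polynomial, satisfies the simple harmonic oscillator eigenvalue equation −ψₙ''(x) + x²·ψₙ(x) = (2n+1)·ψₙ(x) for all x ∈ ℝ. -/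
/-- The `n`-th harmonic oscillator eigenfunction
`ψₙ(x) = Heₙ(√2·x)·exp(-x²/2)`, where `Heₙ` is the `n`-th probabilists'
Hermite polynomial. -/
noncomputable def harmonicOscillatorEigenfunction (n : ℕ) (x : ℝ) : ℝ :=
  (Polynomial.aeval (Real.sqrt 2 * x) (Polynomial.hermite n)) * Real.exp (-x ^ 2 / 2)

/-!
Conjugating by the Gaussian turns `-d²/dx² + x²` into an operator on polynomials:
`-(p e^{-x²/2})'' + x² p e^{-x²/2} = (p + 2x p' - p'') e^{-x²/2}`.
Rescaling the Hermite equation `He'' = x He' - n He` by `√2` shows that `u = Heₙ(√2 ·)`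
satisfies `u'' = 2x u' - 2n u`, on which the conjugated operator acts as `2n + 1`.
-/

open Polynomial Real

namespace Polynomial

theorem derivative_hermite_succ (n : ℕ) :
    derivative (hermite (n + 1)) = ((n : ℤ[X]) + 1) * hermite n := by
  induction n with
  | zero => simp
  | succ n ih =>
    rw [hermite_succ, derivative_sub, derivative_mul, derivative_X, ih, hermite_succ n,
      derivative_mul]
    simp only [derivative_add, derivative_natCast, derivative_one]
    push_cast
    ring

theorem derivative_derivative_hermite (n : ℕ) :
    derivative (derivative (hermite n)) =
      X * derivative (hermite n) - (n : ℤ[X]) * hermite n := by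
  cases n with
  | zero => simp
  | succ n =>
    rw [derivative_hermite_succ, hermite_succ n, derivative_mul]
    simp only [derivative_add, derivative_natCast, derivative_one]
    push_cast
    ring

theorem derivative_comp_C_mul_X {R : Type*} [CommSemiring R] (p : R[X]) (c : R) :
    derivative (p.comp (C c * X)) = C c * (derivative p).comp (C c * X) := by
  rw [derivative_comp, derivative_C_mul_X]

theorem derivative_derivative_comp_C_mul_X {R : Type*} [CommSemiring R] (p : R[X]) (c : R) :
    derivative (derivative (p.comp (C c * X))) =
      C c * C c * (derivative (derivative p)).comp (C c * X) := by
  rw [derivative_comp_C_mul_X, derivative_C_mul, derivative_comp_C_mul_X, mul_assoc]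

end Polynomial

noncomputable def gaussianWeighted (p : ℝ[X]) (x : ℝ) : ℝ :=
  p.eval x * exp (-x ^ 2 / 2)

theorem hasDerivAt_gaussianWeighted (p : ℝ[X]) (x : ℝ) :
    HasDerivAt (gaussianWeighted p) (gaussianWeighted (derivative p - X * p) x) x := by
  have hexp : HasDerivAt (fun x : ℝ => exp (-x ^ 2 / 2)) (exp (-x ^ 2 / 2) * -x) x :=
    ((hasDerivAt_pow 2 x).neg.div_const 2).exp.congr_deriv (by simp only [Pi.neg_apply]; ring)
  refine ((p.hasDerivAt x).mul hexp).congr_deriv ?_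
  simp only [gaussianWeighted, eval_sub, eval_mul, eval_X]
  ring

theorem deriv_gaussianWeighted (p : ℝ[X]) :
    deriv (gaussianWeighted p) = gaussianWeighted (derivative p - X * p) :=
  funext fun x => (hasDerivAt_gaussianWeighted p x).deriv

theorem neg_deriv_deriv_add_sq_mul_gaussianWeighted (p : ℝ[X]) (x : ℝ) :
    -deriv (deriv (gaussianWeighted p)) x + x ^ 2 * gaussianWeighted p x =
      gaussianWeighted (p + 2 * X * derivative p - derivative (derivative p)) x := by
  simp only [deriv_gaussianWeighted, gaussianWeighted, derivative_sub, derivative_mul,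
    derivative_X, eval_sub, eval_add, eval_mul, eval_one, eval_X, eval_ofNat]
  ring

/-- `Heₙ(√2 X)`, i.e. `2^{-n/2} Hₙ` for the physicists' Hermite polynomial `Hₙ`. -/
noncomputable def scaledHermite (n : ℕ) : ℝ[X] :=
  ((hermite n).map (Int.castRingHom ℝ)).comp (C √2 * X)

theorem derivative_derivative_scaledHermite (n : ℕ) :
    derivative (derivative (scaledHermite n)) =
      2 * X * derivative (scaledHermite n) - 2 * (n : ℝ[X]) * scaledHermite n := by
  set P := (hermite n).map (Int.castRingHom ℝ)
  have hP : derivative (derivative P) = X * derivative P - (n : ℝ[X]) * P := by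
    simp only [P, derivative_map, derivative_derivative_hermite, Polynomial.map_sub,
      Polynomial.map_mul, Polynomial.map_X, Polynomial.map_natCast]
  have hc : C √2 * C √2 = (2 : ℝ[X]) := by
    rw [← C_mul, Real.mul_self_sqrt zero_le_two, C_ofNat]
  rw [scaledHermite, derivative_derivative_comp_C_mul_X, hP, derivative_comp_C_mul_X]
  simp only [sub_comp, mul_comp, X_comp, natCast_comp]
  linear_combination (X * C √2 * (derivative P).comp (C √2 * X) - n * P.comp (C √2 * X)) * hc

theorem harmonicOscillatorEigenfunction_eq_gaussianWeighted (n : ℕ) :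
    harmonicOscillatorEigenfunction n = gaussianWeighted (scaledHermite n) := by
  funext x
  simp [harmonicOscillatorEigenfunction, gaussianWeighted, scaledHermite, aeval_def,
    eval₂_eq_eval_map, eval_comp]

/-- **Harmonic oscillator eigenvalue equation.**
For every `n`, the function `ψₙ(x) = Heₙ(√2·x)·exp(-x²/2)` satisfies
`-ψₙ'' + x²·ψₙ = (2n+1)·ψₙ`, substantiating that the simple harmonic
oscillator Hamiltonian `-d²/dx² + x²` has spectrum `2ℕ + 1`. -/
theorem harmonicOscillator_eigenvalue_equation (n : ℕ) (x : ℝ) :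
    -(deriv (deriv (harmonicOscillatorEigenfunction n)) x) +
      x ^ 2 * harmonicOscillatorEigenfunction n x =
        (2 * (n : ℝ) + 1) * harmonicOscillatorEigenfunction n x := by
  rw [harmonicOscillatorEigenfunction_eq_gaussianWeighted,
    neg_deriv_deriv_add_sq_mul_gaussianWeighted, derivative_derivative_scaledHermite]
  simp only [gaussianWeighted, eval_sub, eval_add, eval_mul, eval_natCast, eval_ofNat, eval_X]
  ring
end

section
/- Let h : ℝ → ℝ be continuous and suppose there exist R > 0 and ε > 0 such that h(x) ≥ ε for all x ≥ R and h(x) ≤ −ε for all x ≤ −R. Define f(x) = exp(−∫₀ˣ h(t)dt) and g(x) = exp(∫₀ˣ h(t)dt). Then f is differentiable with f'(x) + h(x)·f(x) = 0 for all x, and f is square-integrable on ℝ, whereas g is not square-integrable on ℝ. -/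
/-! With `H x = ∫₀ˣ h` we have `H' = h`, so `f = exp (-H)` solves `f' + h f = 0`. By the mean
value theorem `H` grows at least like `ε |x|` at both ends, so `f² = exp (-2H)` is
`O(exp (-2ε|x|))` at `±∞` and hence integrable. On the other hand `H` is nondecreasing on
`[R, ∞)`, so `g² = exp (2H) ≥ exp (2H(R)) > 0` there and `g²` cannot be integrable. -/

open MeasureTheory Filter Set Asymptotics Real

section ExpOfPrimitive

variable {φ φ' : ℝ → ℝ} {δ : ℝ}

theorem isBigO_exp_atTop_of_hasDerivAt_of_le (hφ : ∀ x, HasDerivAt φ (φ' x) x)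
    (hδ : ∀ᶠ x in atTop, φ' x ≤ -δ) :
    (fun x => exp (φ x)) =O[atTop] fun x => exp (-δ * x) := by
  obtain ⟨R, hR⟩ := eventually_atTop.1 hδ
  have hdiff : Differentiable ℝ φ := fun x => (hφ x).differentiableAt
  have hdecay : ∀ x, R ≤ x → φ x - φ R ≤ -δ * (x - R) := fun x hx =>
    (convex_Ici R).image_sub_le_mul_sub_of_deriv_le hdiff.continuous.continuousOn
      hdiff.differentiableOn (fun y hy => (hφ y).deriv ▸ hR y (interior_subset hy))
      R self_mem_Ici x hx hx
  refine IsBigO.of_bound (exp (φ R + δ * R)) (eventually_atTop.2 ⟨R, fun x hx => ?_⟩)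
  rw [norm_of_nonneg (exp_pos _).le, norm_of_nonneg (exp_pos _).le, ← exp_add]
  exact exp_le_exp.2 (by linarith [hdecay x hx])

theorem isBigO_exp_atBot_of_hasDerivAt_of_ge (hφ : ∀ x, HasDerivAt φ (φ' x) x)
    (hδ : ∀ᶠ x in atBot, δ ≤ φ' x) :
    (fun x => exp (φ x)) =O[atBot] fun x => exp (δ * x) := by
  obtain ⟨R, hR⟩ := eventually_atBot.1 hδ
  have hdiff : Differentiable ℝ φ := fun x => (hφ x).differentiableAt
  have hgrowth : ∀ x, x ≤ R → δ * (R - x) ≤ φ R - φ x := fun x hx =>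
    (convex_Iic R).mul_sub_le_image_sub_of_le_deriv hdiff.continuous.continuousOn
      hdiff.differentiableOn (fun y hy => (hφ y).deriv ▸ hR y (mem_Iic.1 (interior_subset hy)))
      x hx R self_mem_Iic hx
  refine IsBigO.of_bound (exp (φ R - δ * R)) (eventually_atBot.2 ⟨R, fun x hx => ?_⟩)
  rw [norm_of_nonneg (exp_pos _).le, norm_of_nonneg (exp_pos _).le, ← exp_add]
  exact exp_le_exp.2 (by linarith [hgrowth x hx])

theorem integrable_exp_of_hasDerivAt (hφ : ∀ x, HasDerivAt φ (φ' x) x) (hδ : 0 < δ)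
    (htop : ∀ᶠ x in atTop, φ' x ≤ -δ) (hbot : ∀ᶠ x in atBot, δ ≤ φ' x) :
    Integrable fun x => exp (φ x) :=
  have hcont : Continuous φ := continuous_iff_continuousAt.2 fun x => (hφ x).continuousAt
  hcont.rexp.locallyIntegrable.integrable_of_isBigO_atBot_atTop
    (isBigO_exp_atBot_of_hasDerivAt_of_ge hφ hbot)
    ⟨Iic 0, Iic_mem_atBot 0, integrableOn_exp_mul_Iic hδ 0⟩
    (isBigO_exp_atTop_of_hasDerivAt_of_le hφ htop)
    ⟨Ioi 0, Ioi_mem_atTop 0, integrableOn_exp_mul_Ioi (neg_neg_of_pos hδ) 0⟩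

theorem not_integrable_of_eventually_const_le {f : ℝ → ℝ} {c : ℝ} (hc : 0 < c)
    (hf : ∀ᶠ x in atTop, c ≤ f x) : ¬ Integrable f := by
  intro hint
  obtain ⟨R, hR⟩ := eventually_atTop.1 hf
  have : volume (Ici R) < ⊤ :=
    (measure_mono fun x hx => hR x hx).trans_lt (hint.measure_ge_lt_top hc)
  simp at this

theorem not_integrable_exp_of_hasDerivAt_of_nonneg (hφ : ∀ x, HasDerivAt φ (φ' x) x)
    (htop : ∀ᶠ x in atTop, 0 ≤ φ' x) : ¬ Integrable fun x => exp (φ x) := by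
  obtain ⟨R, hR⟩ := eventually_atTop.1 htop
  have hdiff : Differentiable ℝ φ := fun x => (hφ x).differentiableAt
  have hmono : MonotoneOn φ (Ici R) :=
    monotoneOn_of_deriv_nonneg (convex_Ici R) hdiff.continuous.continuousOn
      hdiff.differentiableOn fun y hy => (hφ y).deriv ▸ hR y (interior_subset hy)
  exact not_integrable_of_eventually_const_le (exp_pos (φ R))
    (eventually_atTop.2 ⟨R, fun x hx => exp_le_exp.2 (hmono self_mem_Ici hx hx)⟩)

end ExpOfPrimitive

theorem memLp_two_exp_iff {α : Type*} [MeasurableSpace α] {μ : Measure α} {ψ : α → ℝ}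
    (hψ : AEStronglyMeasurable ψ μ) :
    MemLp (fun x => exp (ψ x)) 2 μ ↔ Integrable (fun x => exp (2 * ψ x)) μ := by
  rw [memLp_two_iff_integrable_sq (continuous_exp.comp_aestronglyMeasurable hψ)]
  simp only [sq, ← exp_add, two_mul]

theorem callias_ground_state_general (h : ℝ → ℝ) (hcont : Continuous h)
    (R ε : ℝ) (hε : 0 < ε)
    (hplus : ∀ x : ℝ, R ≤ x → ε ≤ h x)
    (hminus : ∀ x : ℝ, x ≤ -R → h x ≤ -ε) :
    Differentiable ℝ (fun x : ℝ => Real.exp (-∫ t in (0 : ℝ)..x, h t)) ∧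
    (∀ x : ℝ, deriv (fun x : ℝ => Real.exp (-∫ t in (0 : ℝ)..x, h t)) x +
      h x * Real.exp (-∫ t in (0 : ℝ)..x, h t) = 0) ∧
    MemLp (fun x : ℝ => Real.exp (-∫ t in (0 : ℝ)..x, h t)) 2 volume ∧
    ¬ MemLp (fun x : ℝ => Real.exp (∫ t in (0 : ℝ)..x, h t)) 2 volume := by
  set H : ℝ → ℝ := fun x => ∫ t in (0 : ℝ)..x, h t
  have hH : ∀ x, HasDerivAt H (h x) x := fun x => (hcont.integral_hasStrictDerivAt 0 x).hasDerivAt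
  have hf : ∀ x, HasDerivAt (fun x => exp (-H x)) (exp (-H x) * -h x) x :=
    fun x => (hH x).neg.exp
  have hHmeas : AEStronglyMeasurable H volume :=
    (continuous_iff_continuousAt.2 fun x => (hH x).continuousAt).aestronglyMeasurable
  have hpos : ∀ᶠ x in atTop, ε ≤ h x := eventually_atTop.2 ⟨R, hplus⟩
  have hneg : ∀ᶠ x in atBot, h x ≤ -ε := eventually_atBot.2 ⟨-R, hminus⟩
  refine ⟨fun x => (hf x).differentiableAt, fun x => by rw [(hf x).deriv]; ring, ?_, ?_⟩
  · refine (memLp_two_exp_iff hHmeas.neg).2 <|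
      integrable_exp_of_hasDerivAt (fun x => (hH x).neg.const_mul 2) (by positivity : 0 < 2 * ε)
        ?_ ?_
    · filter_upwards [hpos] with x hx
      linarith
    · filter_upwards [hneg] with x hx
      linarith
  · refine (memLp_two_exp_iff hHmeas).not.2 <|
      not_integrable_exp_of_hasDerivAt_of_nonneg (fun x => (hH x).const_mul 2) ?_
    filter_upwards [hpos] with x hx
    linarith

/-- **Normalizable and non-normalizable Callias–Dirac ground states.**
If `h : ℝ → ℝ` is continuous, uniformly positive near `+∞` and uniformly
negative near `-∞`, then `f(x) = exp(-∫₀ˣ h)` solves `f' + h·f = 0` and is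
square-integrable, whereas `g(x) = exp(∫₀ˣ h)` is not square-integrable. -/
theorem callias_ground_state (h : ℝ → ℝ) (hcont : Continuous h)
    (R ε : ℝ) (hR : 0 < R) (hε : 0 < ε)
    (hplus : ∀ x : ℝ, R ≤ x → ε ≤ h x)
    (hminus : ∀ x : ℝ, x ≤ -R → h x ≤ -ε) :
    Differentiable ℝ (fun x : ℝ => Real.exp (-∫ t in (0 : ℝ)..x, h t)) ∧
    (∀ x : ℝ, deriv (fun x : ℝ => Real.exp (-∫ t in (0 : ℝ)..x, h t)) x +
      h x * Real.exp (-∫ t in (0 : ℝ)..x, h t) = 0) ∧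
    MemLp (fun x : ℝ => Real.exp (-∫ t in (0 : ℝ)..x, h t)) 2 volume ∧
    ¬ MemLp (fun x : ℝ => Real.exp (∫ t in (0 : ℝ)..x, h t)) 2 volume :=
  callias_ground_state_general h hcont R ε hε hplus hminus
end
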